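/- arXiv:0911.4047 — 5 statements merged into one kernel-verified Lean document; each statement's English description precedes it below -/
import Mathlib

section
/- Accuracy theorem: let D be an SLD derivation for query G in program P via a local computation rule, and let ≤ be a well-quasi-order. If D is safe with respect to ≤ (every covering-ancestor sequence of a selected atom is admissible), then there exists an ASLD derivation D_S for G in P via a depth-preserving computation rule such that simplify(D_S) = D. -/
/-! Basic syntax of definite logic programs: first-order terms, atoms,
substitutions, most general unifiers and clauses. -/

abbrev Var := ℕ

inductive Tm : Type
  | var : Var → Tm
  | fn : ℕ → List Tm → Tm

abbrev Subst := Var → Tm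

def Tm.subst (σ : Subst) : Tm → Tm
  | .var v => σ v
  | .fn f ts => .fn f (ts.attach.map fun t => Tm.subst σ t.1)
decreasing_by simp only [Tm.fn.sizeOf_spec]; have := List.sizeOf_lt_of_mem t.2; omega

structure Atom where
  pred : ℕ
  args : List Tm

def Atom.subst (σ : Subst) (A : Atom) : Atom := ⟨A.pred, A.args.map (Tm.subst σ)⟩

/-- The identity substitution. -/
def idS : Subst := Tm.var

/-- Composition of substitutions: `(σ.comp τ) t = τ(σ(t))`. -/
def Subst.comp (σ τ : Subst) : Subst := fun v => Tm.subst τ (σ v)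

def Unifies (θ : Subst) (A B : Atom) : Prop := A.subst θ = B.subst θ

/-- `θ` is a most general unifier of atoms `A` and `B`. -/
def IsMgu (θ : Subst) (A B : Atom) : Prop :=
  Unifies θ A B ∧ ∀ τ, Unifies τ A B → ∃ δ, ∀ v, τ v = Tm.subst δ (θ v)

structure Clause where
  head : Atom
  body : List Atom

/-! ASLD resolution: goals are lists of items, where an item is either the
pop-mark `↑` or an atom annotated (as ghost information) with the list of its
ancestors, nearest ancestor first; ancestors are recorded in the instantiation
state they had when they were selected.  A state pairs a goal with the
ancestor stack (head = top of the stack). -/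

inductive GItem : Type
  | pop : GItem
  | atom : Atom → List Atom → GItem

def GItem.isPop : GItem → Bool
  | .pop => true
  | _ => false

/-- Apply a substitution to the atom of an item (annotations, which are
snapshots, are left untouched). -/
def instG (θ : Subst) : GItem → GItem
  | .pop => .pop
  | .atom A anc => .atom (A.subst θ) anc

structure AState where
  goal : List GItem
  stack : List Atom

/-- `Admissible wqo A AS`: no element of the sequence `AS` is `wqo`-below the
new atom `A`. -/
def Admissible (wqo : Atom → Atom → Prop) (A : Atom) (AS : List Atom) : Prop :=
  ∀ B ∈ AS, ¬ wqo B A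

/-- ASLD resolution steps.  **derive** selects (via an arbitrary computation
rule) an atom `A` of the goal, provided the leftmost item of the goal is not a
`↑` mark and `A` is admissible w.r.t. the contents of the ancestor stack;
it replaces the goal by the instantiated clause body placed at the front,
followed by a `↑` mark and the instantiated remaining atoms, and pushes `A`
onto the stack.  **popDerive** applies when the leftmost item is `↑`: it
removes the mark and pops the stack. -/
inductive AStep (P : List Clause) (wqo : Atom → Atom → Prop) : AState → AState → Prop
  | derive (pre post : List GItem) (A : Atom) (anc : List Atom) (C : Clause)
      (θ : Subst) (AS : List Atom)
      (hC : C ∈ P) (hmgu : IsMgu θ A C.head)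
      (hleft : (pre ++ GItem.atom A anc :: post).head? ≠ some GItem.pop)
      (hadm : Admissible wqo A AS) :
      AStep P wqo ⟨pre ++ GItem.atom A anc :: post, AS⟩
        ⟨(C.body.map fun B => GItem.atom (B.subst θ) (A :: anc)) ++
            GItem.pop :: (pre ++ post).map (instG θ), A :: AS⟩
  | popDerive (G : List GItem) (T : Atom) (AS : List Atom) :
      AStep P wqo ⟨GItem.pop :: G, T :: AS⟩ ⟨G, AS⟩

/-- The initial ASLD state for a query `Q`: all atoms have an empty ancestor
annotation and the stack is empty. -/
def initState (Q : List Atom) : AState :=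
  ⟨Q.map fun A => GItem.atom A [], []⟩

/-- SLD goals with ghost ancestor annotations: each atom carries the list of
its ancestors (nearest first), in the instantiation state they had when they
were selected. -/
abbrev SGoal := List (Atom × List Atom)

def instA (θ : Subst) (x : Atom × List Atom) : Atom × List Atom :=
  (x.1.subst θ, x.2)

/-- Safe SLD resolution steps (front placement) via a local computation rule:
the selected atom has maximal ancestor depth in the goal, and its covering
ancestor sequence is admissible w.r.t. the wqo. -/
inductive SafeLocalStep (P : List Clause) (wqo : Atom → Atom → Prop) : SGoal → SGoal → Prop
  | step (pre post : SGoal) (A : Atom) (anc : List Atom) (C : Clause) (θ : Subst)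
      (hC : C ∈ P) (hmgu : IsMgu θ A C.head)
      (hlocal : ∀ x ∈ pre ++ post, x.2.length ≤ anc.length)
      (hsafe : Admissible wqo A anc) :
      SafeLocalStep P wqo (pre ++ (A, anc) :: post)
        ((C.body.map fun B => (B.subst θ, A :: anc)) ++ (pre ++ post).map (instA θ))

/-- The derive rule of ASLD resolution restricted to depth-preserving
computation rules (the selected atom lies strictly left of the leftmost `↑`). -/
inductive ADeriveDP (P : List Clause) (wqo : Atom → Atom → Prop) : AState → AState → Prop
  | derive (pre post : List GItem) (A : Atom) (anc : List Atom) (C : Clause)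
      (θ : Subst) (AS : List Atom)
      (hC : C ∈ P) (hmgu : IsMgu θ A C.head)
      (hdp : GItem.pop ∉ pre)
      (hadm : Admissible wqo A AS) :
      ADeriveDP P wqo ⟨pre ++ GItem.atom A anc :: post, AS⟩
        ⟨(C.body.map fun B => GItem.atom (B.subst θ) (A :: anc)) ++
            GItem.pop :: (pre ++ post).map (instG θ), A :: AS⟩

/-- The pop-derive rule of ASLD resolution. -/
inductive APop : AState → AState → Prop
  | popDerive (G : List GItem) (T : Atom) (AS : List Atom) :
      APop ⟨GItem.pop :: G, T :: AS⟩ ⟨G, AS⟩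

/-- Erasing the `↑` marks of an ASLD goal yields an (annotated) SLD goal. -/
def eraseG (G : List GItem) : SGoal :=
  G.filterMap fun i =>
    match i with
    | GItem.pop => none
    | GItem.atom A anc => some (A, anc)

/-- `Corr l gs`: the list of states `l` is an ASLD derivation (via
depth-preserving derive and pop-derive steps) whose simplification — obtained
by performing the same derive steps and ignoring the pop-derive steps and the
`↑` atoms — is exactly the SLD goal sequence `gs`; i.e. `simplify(l) = gs`. -/
inductive Corr (P : List Clause) (wqo : Atom → Atom → Prop) :
    List AState → List SGoal → Prop
  | base (s : AState) : Corr P wqo [s] [eraseG s.goal]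
  | pop (s s' : AState) (l : List AState) (gs : List SGoal) :
      APop s s' → Corr P wqo (s' :: l) gs → Corr P wqo (s :: s' :: l) gs
  | derive (s s' : AState) (l : List AState) (gs : List SGoal) :
      ADeriveDP P wqo s s' → Corr P wqo (s' :: l) gs →
      Corr P wqo (s :: s' :: l) (eraseG s.goal :: gs)

/-! Run the SLD derivation inside ASLD, maintaining the invariant that the atoms
between the `i`-th and `(i+1)`-th `↑` are annotated with the ancestor stack
minus its top `i` entries.  Annotations then only shrink from left to right, so
an atom of maximal ancestor depth lies in the first nonempty segment: popping
the `↑` marks in front of it makes it selectable by a depth-preserving rule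
with the stack equal to its ancestor list, where safety is admissibility, and
the derive step reproduces the SLD step and restores the invariant. -/

@[simp] lemma eraseG_nil : eraseG [] = [] := rfl

@[simp] lemma eraseG_pop_cons (G : List GItem) : eraseG (GItem.pop :: G) = eraseG G := rfl

@[simp] lemma eraseG_atom_cons (A : Atom) (anc : List Atom) (G : List GItem) :
    eraseG (GItem.atom A anc :: G) = (A, anc) :: eraseG G := rfl

@[simp] lemma eraseG_append (G G' : List GItem) : eraseG (G ++ G') = eraseG G ++ eraseG G' :=
  List.filterMap_append ..

@[simp] lemma eraseG_replicate_pop (n : ℕ) : eraseG (List.replicate n GItem.pop) = [] := by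
  induction n <;> simp_all [List.replicate_succ]

@[simp] lemma eraseG_map_instG (θ : Subst) (G : List GItem) :
    eraseG (G.map (instG θ)) = (eraseG G).map (instA θ) := by
  induction G with
  | nil => rfl
  | cons i G ih => cases i <;> simp [instG, instA, ih]

@[simp] lemma eraseG_map_atom {α : Type*} (l : List α) (f : α → Atom) (g : α → List Atom) :
    eraseG (l.map fun x => GItem.atom (f x) (g x)) = l.map fun x => (f x, g x) := by
  induction l <;> simp_all

def Coherent : List GItem → List Atom → Prop
  | [], _ => True
  | GItem.pop :: _, [] => False
  | GItem.pop :: G, _ :: AS => Coherent G AS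
  | GItem.atom _ anc :: G, AS => anc = AS ∧ Coherent G AS

lemma Coherent.isSuffix_of_mem {G : List GItem} {AS : List Atom} (hG : Coherent G AS)
    {A : Atom} {anc : List Atom} (hA : (A, anc) ∈ eraseG G) : anc <:+ AS := by
  induction G generalizing AS with
  | nil => simp at hA
  | cons i G ih =>
    cases i with
    | pop =>
      cases AS with
      | nil => exact hG.elim
      | cons T AS => exact (ih hG (by simpa using hA)).trans (List.suffix_cons T AS)
    | atom B banc =>
      obtain ⟨rfl, hG⟩ := hG
      rcases List.mem_cons.mp hA with h | h
      · cases h; exact List.suffix_refl _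
      · exact ih hG h

lemma Coherent.of_replicate_pop_append {G : List GItem} {Ts AS : List Atom}
    (h : Coherent (List.replicate Ts.length GItem.pop ++ G) (Ts ++ AS)) : Coherent G AS := by
  induction Ts <;> simp_all [List.replicate_succ, Coherent]

lemma Coherent.map_instG (θ : Subst) {G : List GItem} {AS : List Atom} (hG : Coherent G AS) :
    Coherent (G.map (instG θ)) AS := by
  induction G generalizing AS with
  | nil => trivial
  | cons i G ih =>
    cases i with
    | pop =>
      cases AS with
      | nil => exact hG.elim
      | cons T AS => exact ih hG
    | atom B banc => exact ⟨hG.1, ih hG.2⟩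

lemma Coherent.eq_stack_and_erase {pre post : List GItem} {A : Atom} {anc AS : List Atom}
    (hG : Coherent (pre ++ GItem.atom A anc :: post) AS) (hpre : GItem.pop ∉ pre) :
    anc = AS ∧ Coherent (pre ++ post) AS := by
  induction pre with
  | nil => exact hG
  | cons i pre ih =>
    cases i with
    | pop => exact absurd List.mem_cons_self hpre
    | atom B banc =>
      obtain ⟨rfl, hG⟩ := hG
      obtain ⟨h, hrest⟩ := ih hG (fun h => hpre (List.mem_cons_of_mem _ h))
      exact ⟨h, rfl, hrest⟩

lemma ADeriveDP.coherent {P : List Clause} {wqo : Atom → Atom → Prop} {s s' : AState}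
    (h : ADeriveDP P wqo s s') (hs : Coherent s.goal s.stack) : Coherent s'.goal s'.stack := by
  cases h with
  | derive pre post A anc C θ AS _ _ hdp _ =>
    obtain ⟨rfl, hrest⟩ := hs.eq_stack_and_erase hdp
    induction C.body with
    | nil => exact hrest.map_instG θ
    | cons B bs ih => exact ⟨rfl, ih⟩

lemma Coherent.exists_split_of_local {G : List GItem} {AS : List Atom} (hG : Coherent G AS)
    {pre post : SGoal} {A : Atom} {anc : List Atom} (hsplit : eraseG G = pre ++ (A, anc) :: post)
    (hlocal : ∀ x ∈ pre ++ post, x.2.length ≤ anc.length) :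
    ∃ (Ts : List Atom) (preG postG : List GItem),
      G = List.replicate Ts.length GItem.pop ++ (preG ++ GItem.atom A anc :: postG) ∧
      AS = Ts ++ anc ∧ GItem.pop ∉ preG ∧ eraseG preG = pre ∧ eraseG postG = post := by
  induction G generalizing AS pre with
  | nil => simp at hsplit
  | cons i G ih =>
    cases i with
    | pop =>
      cases AS with
      | nil => exact hG.elim
      | cons T AS =>
        obtain ⟨Ts, preG, postG, rfl, rfl, hpop, rfl, rfl⟩ := ih hG (by simpa using hsplit) hlocal
        exact ⟨T :: Ts, preG, postG, by simp [List.replicate_succ], rfl, hpop, rfl, rfl⟩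
    | atom B banc =>
      obtain ⟨rfl, hG⟩ := hG
      cases pre with
      | nil =>
        obtain ⟨⟨rfl, rfl⟩, rfl⟩ : (B = A ∧ banc = anc) ∧ eraseG G = post := by simpa using hsplit
        exact ⟨[], [], G, by simp, by simp, by simp, rfl, rfl⟩
      | cons p pre =>
        obtain ⟨rfl, hrest⟩ : p = (B, banc) ∧ eraseG G = pre ++ (A, anc) :: post := by
          simpa [eq_comm] using hsplit
        obtain rfl : anc = banc :=
          (hG.isSuffix_of_mem (A := A) (by simp [hrest])).eq_of_length_le
            (hlocal _ List.mem_cons_self)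
        obtain ⟨Ts, preG, postG, rfl, hAS, hpop, rfl, rfl⟩ :=
          ih hG hrest fun x hx => hlocal x (List.mem_cons_of_mem _ hx)
        obtain rfl : Ts = [] := by simpa using hAS
        exact ⟨[], GItem.atom B anc :: preG, postG, by simp, by simp, by simp [hpop], by simp, rfl⟩

lemma Corr.replicate_pop {P : List Clause} {wqo : Atom → Atom → Prop} (Ts : List Atom)
    {G : List GItem} {AS : List Atom} {l : List AState} {gs : List SGoal}
    (h : Corr P wqo (⟨G, AS⟩ :: l) gs) :
    ∃ l', Corr P wqo (⟨List.replicate Ts.length GItem.pop ++ G, Ts ++ AS⟩ :: l') gs := by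
  induction Ts with
  | nil => exact ⟨l, h⟩
  | cons T Ts ih =>
    obtain ⟨l', h'⟩ := ih
    exact ⟨_, Corr.pop ⟨_, _⟩ _ l' gs (APop.popDerive _ T _) h'⟩

lemma exists_corr_of_safeLocalStep {P : List Clause} {wqo : Atom → Atom → Prop}
    {G : List GItem} {AS : List Atom} {g : SGoal} (hG : Coherent G AS)
    (hstep : SafeLocalStep P wqo (eraseG G) g) :
    ∃ s' : AState, Coherent s'.goal s'.stack ∧ eraseG s'.goal = g ∧
      ∀ l gs, Corr P wqo (s' :: l) gs → ∃ l', Corr P wqo (⟨G, AS⟩ :: l') (eraseG G :: gs) := by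
  generalize hG' : eraseG G = g₀ at hstep
  obtain ⟨pre, post, A, anc, C, θ, hC, hmgu, hlocal, hsafe⟩ := hstep
  obtain ⟨Ts, preG, postG, rfl, rfl, hpop, rfl, rfl⟩ := hG.exists_split_of_local hG' hlocal
  have hder := ADeriveDP.derive preG postG A anc C θ anc hC hmgu hpop hsafe
  refine ⟨_, hder.coherent hG.of_replicate_pop_append, by simp, fun l gs hl => ?_⟩
  simpa using Corr.replicate_pop Ts (Corr.derive _ _ l gs hder hl)

lemma exists_corr_of_isChain {P : List Clause} {wqo : Atom → Atom → Prop} (gs : List SGoal) :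
    ∀ {G : List GItem} {AS : List Atom}, Coherent G AS →
      List.IsChain (SafeLocalStep P wqo) (eraseG G :: gs) →
      ∃ l, Corr P wqo (⟨G, AS⟩ :: l) (eraseG G :: gs) := by
  induction gs with
  | nil => exact fun _ _ => ⟨[], Corr.base _⟩
  | cons g gs ih =>
    intro G AS hG hchain
    obtain ⟨hstep, hchain⟩ := List.isChain_cons_cons.mp hchain
    obtain ⟨s', hs', rfl, hsim⟩ := exists_corr_of_safeLocalStep hG hstep
    obtain ⟨l, hl⟩ := ih hs' hchain
    exact hsim l _ hl

lemma coherent_initState (Q : List Atom) : Coherent (initState Q).goal (initState Q).stack := by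
  induction Q with
  | nil => trivial
  | cons A Q ih => exact ⟨rfl, ih⟩

/-- Accuracy: if `D` is an SLD derivation for query `Q` in program `P` via a
local computation rule which is safe w.r.t. the wqo (every covering-ancestor
sequence of a selected atom is admissible), then there exists an ASLD
derivation `D_S` for `Q` in `P` via a depth-preserving computation rule such
that `simplify(D_S) = D`. -/
theorem accuracy (P : List Clause) (wqo : Atom → Atom → Prop) (Q : List Atom)
    (gs : List SGoal)
    (hhead : gs.head? = some (Q.map fun A => (A, ([] : List Atom))))
    (hchain : List.Chain' (SafeLocalStep P wqo) gs) :
    ∃ l : List AState, l.head? = some (initState Q) ∧ Corr P wqo l gs := by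
  obtain ⟨gs, rfl⟩ : ∃ gs', gs = eraseG (initState Q).goal :: gs' := by
    cases gs with
    | nil => simp at hhead
    | cons g gs => exact ⟨gs, by simp_all [initState]⟩
  obtain ⟨l, hl⟩ := exists_corr_of_isChain gs (coherent_initState Q) hchain
  exact ⟨_, rfl, hl⟩
end

section
/- Over-approximation for arbitrary computation rules: for any ASLD derivation D_S (with a computation rule that need not be depth-preserving) and corresponding SLD derivation D = simplify(D_S), if the current goal is A1,...,An,↑,... with each Ai ≠ ↑ and current stack AS, then for all i in 1..n, contents(AS) ⊇ Ancestors(Ai, D); i.e., the ancestor stack always contains at least the true ancestors of every atom before the first pop-mark. -/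
/-- Splitting a mapped list around a distinguished element. -/
lemma map_split {α β : Type} (g : α → β) :
    ∀ (l : List α) (u : List β) (x : β) (v : List β), l.map g = u ++ x :: v →
      ∃ u' x' v', l = u' ++ x' :: v' ∧ u'.map g = u ∧ g x' = x ∧ v'.map g = v := by
  intro l
  induction l with
  | nil => intro u x v h; simp at h
  | cons a l ih =>
    intro u x v h
    cases u with
    | nil =>
      simp at h
      exact ⟨[], a, l, rfl, rfl, h.1, h.2⟩
    | cons b u =>
      simp only [List.map_cons, List.cons_append, List.cons.injEq] at h
      obtain ⟨u', x', v', h1, h2, h3, h4⟩ := ih u x v h.2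
      exact ⟨a :: u', x', v', by simp [h1], by simp [h.1, h2], h3, h4⟩

lemma instG_isPop (θ : Subst) (g : GItem) : (instG θ g).isPop = g.isPop := by
  cases g <;> rfl

/-- Inserting a non-pop item in the middle of a list: any split around an
element can be transported, preserving the pop-count of the prefix. -/
lemma insert_mid_split (pre post u v : List GItem) (x y : GItem)
    (h : pre ++ post = u ++ x :: v) (hy : y.isPop = false) :
    ∃ u₂ v₂, pre ++ y :: post = u₂ ++ x :: v₂ ∧
      u₂.countP GItem.isPop = u.countP GItem.isPop := by
  rcases List.append_eq_append_iff.mp h with ⟨a', hu, hpost⟩ | ⟨c', hpre, hc⟩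
  · refine ⟨pre ++ y :: a', v, by simp [hpost], ?_⟩
    simp [hu, List.countP_cons, hy]
  · cases c' with
    | nil =>
      simp only [List.nil_append] at hc
      refine ⟨pre ++ [y], v, by simp [hc], ?_⟩
      simp [List.nil_append] at hpre
      simp [hpre, List.countP_cons, hy]
    | cons z c'' =>
      simp only [List.cons_append, List.cons.injEq] at hc
      refine ⟨u, c'' ++ y :: post, ?_, rfl⟩
      rw [hpre, hc.1]
      simp [hc.2]

/-- The key invariant: an atom of the goal having `k` pop-marks to its left has
all of its recorded ancestors in `stack.drop k`. -/
lemma stack_invariant (P : List Clause) (wqo : Atom → Atom → Prop)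
    (Q : List Atom) (s : AState)
    (hreach : Relation.ReflTransGen (AStep P wqo) (initState Q) s) :
    ∀ pre rest A anc, s.goal = pre ++ GItem.atom A anc :: rest →
      ∀ B ∈ anc, B ∈ s.stack.drop (pre.countP GItem.isPop) := by
  induction hreach with
  | refl =>
    intro pre rest A anc hsplit B hB
    obtain ⟨u', x', v', _, _, hx, _⟩ := map_split _ Q pre (GItem.atom A anc) rest hsplit
    simp only [GItem.atom.injEq] at hx
    rw [← hx.2] at hB
    simp at hB
  | tail hsteps hstep ih =>
    rename_i s₁ s₂
    intro pre rest A anc hsplit B hB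
    cases hstep with
    | derive pre₀ post₀ A₀ anc₀ C θ AS hC hmgu hleft hadm =>
      simp only at hsplit ⊢
      have hA0anc : ∀ B ∈ anc₀, B ∈ AS.drop (pre₀.countP GItem.isPop) :=
        fun B hB => ih pre₀ post₀ A₀ anc₀ rfl B hB
      rcases List.append_eq_append_iff.mp hsplit with
        ⟨a', hpre, hrest⟩ | ⟨c', hLsplit, hrest⟩
      · -- the selected atom is to the right of the new pop mark
        cases a' with
        | nil => simp at hrest
        | cons p a'' =>
          simp only [List.cons_append, List.cons.injEq] at hrest
          obtain ⟨hp, hM'⟩ := hrest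
          obtain ⟨u', x', v', hsplit', hu, hx, hv⟩ :=
            map_split (instG θ) (pre₀ ++ post₀) a'' (GItem.atom A anc) rest hM'
          obtain ⟨A', hx'eq⟩ : ∃ A', x' = GItem.atom A' anc := by
            cases x' with
            | pop => simp [instG] at hx
            | atom A' anc' =>
              simp only [instG, GItem.atom.injEq] at hx
              exact ⟨A', by rw [hx.2]⟩
          rw [hx'eq] at hsplit'
          obtain ⟨u₂, v₂, hsplit₂, hcount₂⟩ :=
            insert_mid_split pre₀ post₀ u' v' (GItem.atom A' anc) (GItem.atom A₀ anc₀)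
              hsplit' rfl
          have hanc := fun B hB => ih u₂ v₂ A' anc hsplit₂ B hB
          have hcpre : pre.countP GItem.isPop = u'.countP GItem.isPop + 1 := by
            rw [hpre, ← hp]
            rw [List.countP_append, List.countP_cons]
            have h1 : (List.map (fun Bd => GItem.atom (Bd.subst θ) (A₀ :: anc₀))
                C.body).countP GItem.isPop = 0 := by
              rw [List.countP_map]
              simp [Function.comp, GItem.isPop]
            have h2 : a''.countP GItem.isPop = u'.countP GItem.isPop := by
              rw [← hu, List.countP_map]
              congr 1
              ext g
              simp [Function.comp, instG_isPop]
            simp [h1, h2, GItem.isPop]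
          rw [hcpre]
          rw [List.drop_succ_cons, ← hcount₂]
          exact hanc B hB
      · -- the atom is among the new body atoms
        cases c' with
        | nil => simp at hrest
        | cons y c'' =>
          simp only [List.cons_append, List.cons.injEq] at hrest
          obtain ⟨u', x', v', _, hu, hx, _⟩ :=
            map_split (fun Bd => GItem.atom (Bd.subst θ) (A₀ :: anc₀)) C.body
              pre (GItem.atom A anc) c''
              (by rw [hLsplit, ← hrest.1])
          simp only [GItem.atom.injEq] at hx
          have hanc : anc = A₀ :: anc₀ := hx.2.symm
          have hcpre : pre.countP GItem.isPop = 0 := by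
            rw [← hu, List.countP_map]
            simp [Function.comp, GItem.isPop]
          rw [hcpre, List.drop_zero]
          rw [hanc] at hB
          rcases List.mem_cons.mp hB with h | h
          · simp [h]
          · exact List.mem_cons_of_mem _ (List.drop_subset _ _ (hA0anc B h))
    | popDerive G T AS =>
      simp only at hsplit ⊢
      have := ih (GItem.pop :: pre) rest A anc (by simp [hsplit]) B hB
      simpa [List.countP_cons, GItem.isPop] using this

/-- Over-approximation for arbitrary computation rules: in any state reachable
by ASLD resolution (with a computation rule that need not be
depth-preserving), every atom occurring before the first `↑` mark of the goal
has all of its ancestors (in the corresponding SLD derivation, recorded here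
as the ghost annotation) contained in the ancestor stack. -/
theorem stack_superset_of_ancestors (P : List Clause) (wqo : Atom → Atom → Prop)
    (Q : List Atom) (s : AState)
    (hreach : Relation.ReflTransGen (AStep P wqo) (initState Q) s)
    (pre rest : List GItem) (A : Atom) (anc : List Atom)
    (hsplit : s.goal = pre ++ GItem.atom A anc :: rest)
    (hnopop : GItem.pop ∉ pre) :
    ∀ B ∈ anc, B ∈ s.stack := by
  have hc : pre.countP GItem.isPop = 0 := by
    rw [List.countP_eq_zero]
    intro g hg
    cases g with
    | pop => exact absurd hg hnopop
    | atom => simp [GItem.isPop]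
  have := stack_invariant P wqo Q s hreach pre rest A anc hsplit
  rw [hc, List.drop_zero] at this
  exact this
end

section
/- Termination of ASLD trees: for any query G, program P, and well-quasi-order ≤ on atoms, the ASLD tree for G in P via any computation rule, using ≤ for the admissibility checks of derive steps against stack contents, is finite. -/
/-- ASLD steps where the selected atom is chosen by a fixed (arbitrary)
computation rule `R`, giving the position of the selected atom in the goal,
and where the (unique up to renaming) mgu is computed by a fixed unification
function `mguOf`; the branching of the ASLD tree is thus over the (finitely
many) program clauses. -/
inductive AStepDet (P : List Clause) (wqo : Atom → Atom → Prop)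
    (R : List GItem → ℕ) (mguOf : Atom → Atom → Option Subst) :
    AState → AState → Prop
  | derive (pre post : List GItem) (A : Atom) (anc : List Atom) (C : Clause)
      (θ : Subst) (AS : List Atom)
      (hC : C ∈ P) (hmgu : mguOf A C.head = some θ)
      (hsel : pre.length = R (pre ++ GItem.atom A anc :: post))
      (hleft : (pre ++ GItem.atom A anc :: post).head? ≠ some GItem.pop)
      (hadm : Admissible wqo A AS) :
      AStepDet P wqo R mguOf ⟨pre ++ GItem.atom A anc :: post, AS⟩
        ⟨(C.body.map fun B => GItem.atom (B.subst θ) (A :: anc)) ++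
            GItem.pop :: (pre ++ post).map (instG θ), A :: AS⟩
  | popDerive (G : List GItem) (T : Atom) (AS : List Atom) :
      AStepDet P wqo R mguOf ⟨GItem.pop :: G, T :: AS⟩ ⟨G, AS⟩

/-- A relation `r` is a well-quasi-order if it is reflexive and transitive and
every infinite sequence contains indices `i < j` with `r (s i) (s j)`. -/
def IsWqo {S : Type*} (r : S → S → Prop) : Prop :=
  Reflexive r ∧ Transitive r ∧ ∀ s : ℕ → S, ∃ i j, i < j ∧ r (s i) (s j)

/-! The stack of a state is a bad sequence for `wqo`, so by the well-quasi-order property pushing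
admissible atoms onto it is well founded, and every such stack gets an ordinal rank which drops
under each push and grows under each pop.  A goal item sits at the stack that is current when it
is reached, i.e. after the `↑` marks to its left have popped; the multiset of the ranks of these
stacks decreases in the Dershowitz–Manna order at every step.  A derive step replaces the selected
atom by the clause body and a `↑`, all sitting at the new, lower-ranked stack, while every other
item keeps its stack.  Since each state has finitely many successors, the ASLD tree is finite. -/

theorem List.finite_setOf_isChain_of_acc {α : Type*} {r : α → α → Prop}
    (hfin : ∀ a, {b | r a b}.Finite) {a : α} (ha : Acc (flip r) a) :
    {l : List α | l.head? = some a ∧ l.IsChain r}.Finite := by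
  induction ha with
  | intro a _ ih =>
    have hsub : {l : List α | l.head? = some a ∧ l.IsChain r} ⊆
        insert [a] (⋃ b ∈ {b | r a b},
          List.cons a '' {l : List α | l.head? = some b ∧ l.IsChain r}) := by
      rintro (_ | ⟨a', _ | ⟨b, l⟩⟩) ⟨hhead, hchain⟩
      · simp at hhead
      · obtain rfl : a' = a := by simpa using hhead
        exact Set.mem_insert _ _
      · obtain rfl : a' = a := by simpa using hhead
        obtain ⟨hab, hchain⟩ := List.isChain_cons_cons.1 hchain
        exact Or.inr (Set.mem_biUnion hab ⟨b :: l, ⟨rfl, hchain⟩, rfl⟩)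
    exact ((hfin a).biUnion fun b hab => (ih b hab).image _).insert _ |>.subset hsub

theorem acc_flip_of_invariant_of_lt {α β : Type*} {r : α → α → Prop} {lt : β → β → Prop}
    (hlt : WellFounded lt) (p : α → Prop) (f : α → β)
    (hstep : ∀ a b, p a → r a b → p b ∧ lt (f b) (f a)) {a : α} (ha : p a) :
    Acc (flip r) a := by
  induction InvImage.accessible f (hlt.apply (f a)) with
  | intro a _ ih =>
    exact .intro a fun b hab => ih b (hstep a b ha hab).2 (hstep a b ha hab).1

theorem wellFounded_cons_of_forall_exists_rel {α : Type*} {r : α → α → Prop}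
    (hr : ∀ s : ℕ → α, ∃ i j, i < j ∧ r (s i) (s j)) :
    WellFounded fun l' l : List α => ∃ a, l' = a :: l ∧ ∀ b ∈ l, ¬ r b a := by
  refine wellFounded_iff_isEmpty_descending_chain.2 ⟨fun ⟨f, hf⟩ => ?_⟩
  choose a hpush hbad using hf
  have hmem : ∀ i j, i < j → a i ∈ f j := by
    intro i j hij
    induction j, hij using Nat.le_induction with
    | base => simp [hpush i]
    | succ j _ ih => simp [hpush j, ih]
  obtain ⟨i, j, hij, hrel⟩ := hr a
  exact hbad j (a i) (hmem i j hij) hrel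

namespace ASLD

variable {wqo : Atom → Atom → Prop}

def Push (wqo : Atom → Atom → Prop) (AS' AS : List Atom) : Prop :=
  ∃ A, AS' = A :: AS ∧ Admissible wqo A AS

/-- A stack is bad when each atom is admissible with respect to the atoms below it. -/
def IsBad (wqo : Atom → Atom → Prop) (AS : List Atom) : Prop :=
  AS.Pairwise fun A B => ¬ wqo B A

theorem isBad_cons {A : Atom} {AS : List Atom} :
    IsBad wqo (A :: AS) ↔ Admissible wqo A AS ∧ IsBad wqo AS :=
  List.pairwise_cons

theorem wellFounded_push (hwqo : IsWqo wqo) : WellFounded (Push wqo) :=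
  wellFounded_cons_of_forall_exists_rel hwqo.2.2

section Rank

variable [IsWellFounded (List Atom) (Push wqo)]

theorem rank_cons_lt {A : Atom} {AS : List Atom} (hadm : Admissible wqo A AS) :
    IsWellFounded.rank (Push wqo) (A :: AS) < IsWellFounded.rank (Push wqo) AS :=
  IsWellFounded.rank_lt_of_rel ⟨A, rfl, hadm⟩

theorem rank_le_of_suffix {AS AS' : List Atom} (hbad : IsBad wqo AS) (hsuf : AS' <:+ AS) :
    IsWellFounded.rank (Push wqo) AS ≤ IsWellFounded.rank (Push wqo) AS' := by
  obtain ⟨L, rfl⟩ := hsuf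
  induction L with
  | nil => exact le_rfl
  | cons A L ih =>
    rw [List.cons_append, isBad_cons] at hbad
    exact (rank_cons_lt hbad.1).le.trans (ih hbad.2)

end Rank

def stackAfter : List GItem → List Atom → List Atom
  | [], AS => AS
  | .pop :: G, AS => stackAfter G AS.tail
  | .atom _ _ :: G, AS => stackAfter G AS

/-- The stack that is current when each item of `G` is reached, starting from stack `AS`. -/
def itemStacks : List GItem → List Atom → List (List Atom)
  | [], _ => []
  | .pop :: G, AS => AS :: itemStacks G AS.tail
  | .atom _ _ :: G, AS => AS :: itemStacks G AS

theorem stackAfter_suffix : ∀ (G : List GItem) (AS : List Atom), stackAfter G AS <:+ AS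
  | [], _ => List.suffix_refl _
  | .pop :: G, AS => (stackAfter_suffix G AS.tail).trans (List.tail_suffix AS)
  | .atom _ _ :: G, AS => stackAfter_suffix G AS

theorem itemStacks_append : ∀ (G G' : List GItem) (AS : List Atom),
    itemStacks (G ++ G') AS = itemStacks G AS ++ itemStacks G' (stackAfter G AS)
  | [], _, _ => rfl
  | .pop :: G, G', AS => by simp [itemStacks, stackAfter, itemStacks_append G G' AS.tail]
  | .atom _ _ :: G, G', AS => by simp [itemStacks, stackAfter, itemStacks_append G G' AS]

theorem itemStacks_map_instG (θ : Subst) : ∀ (G : List GItem) (AS : List Atom),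
    itemStacks (G.map (instG θ)) AS = itemStacks G AS
  | [], _ => rfl
  | .pop :: G, AS => by simp [instG, itemStacks, itemStacks_map_instG θ G AS.tail]
  | .atom _ _ :: G, AS => by simp [instG, itemStacks, itemStacks_map_instG θ G AS]

theorem stackAfter_map_instG (θ : Subst) : ∀ (G : List GItem) (AS : List Atom),
    stackAfter (G.map (instG θ)) AS = stackAfter G AS
  | [], _ => rfl
  | .pop :: G, AS => stackAfter_map_instG θ G AS.tail
  | .atom _ _ :: G, AS => stackAfter_map_instG θ G AS

theorem stackAfter_map_atom (f : Atom → Atom) (anc : List Atom) (L AS : List Atom) :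
    stackAfter (L.map fun B => .atom (f B) anc) AS = AS := by
  induction L with
  | nil => rfl
  | cons B L ih => exact ih

theorem itemStacks_map_atom (f : Atom → Atom) (anc : List Atom) (L AS : List Atom) :
    itemStacks (L.map fun B => .atom (f B) anc) AS = List.replicate L.length AS := by
  induction L with
  | nil => rfl
  | cons B L ih => simp [itemStacks, ih, List.replicate_succ]

noncomputable def rankMeasure (wqo : Atom → Atom → Prop) [IsWellFounded (List Atom) (Push wqo)]
    (s : AState) : Multiset Ordinal :=
  ((itemStacks s.goal s.stack).map (IsWellFounded.rank (Push wqo)) : Multiset Ordinal)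

/-- The only state a derive step from `s` with clause `C` can reach (junk if there is no such
step). -/
def deriveResult (R : List GItem → ℕ) (mguOf : Atom → Atom → Option Subst) (s : AState)
    (C : Clause) : AState :=
  match s.goal.drop (R s.goal) with
  | .atom A anc :: post =>
    match mguOf A C.head with
    | some θ =>
      ⟨(C.body.map fun B => .atom (B.subst θ) (A :: anc)) ++
        .pop :: (s.goal.take (R s.goal) ++ post).map (instG θ), A :: s.stack⟩
    | none => s
  | _ => s

end ASLD

namespace AStepDet

open ASLD

variable {wqo : Atom → Atom → Prop}

theorem isBad {P : List Clause} {R : List GItem → ℕ}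
    {mguOf : Atom → Atom → Option Subst} {s t : AState}
    (hst : AStepDet P wqo R mguOf s t) (hbad : IsBad wqo s.stack) : IsBad wqo t.stack := by
  cases hst with
  | derive _ _ _ _ _ _ _ _ _ _ _ hadm => exact isBad_cons.2 ⟨hadm, hbad⟩
  | popDerive => exact (isBad_cons.1 hbad).2

theorem rankMeasure_lt [IsWellFounded (List Atom) (Push wqo)] {P : List Clause}
    {R : List GItem → ℕ} {mguOf : Atom → Atom → Option Subst} {s t : AState}
    (hst : AStepDet P wqo R mguOf s t) (hbad : IsBad wqo s.stack) :
    (rankMeasure wqo t).IsDershowitzMannaLT (rankMeasure wqo s) := by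
  cases hst with
  | popDerive G T AS =>
    exact ⟨rankMeasure wqo ⟨G, AS⟩, 0, {IsWellFounded.rank (Push wqo) (T :: AS)}, by simp,
      by simp, by simp [rankMeasure, itemStacks, ← Multiset.cons_coe, ← Multiset.singleton_add,
        add_comm], by simp⟩
  | derive pre post A anc C θ AS _ _ _ _ hadm =>
    have hlt : IsWellFounded.rank (Push wqo) (A :: AS) <
        IsWellFounded.rank (Push wqo) (stackAfter pre AS) :=
      (rank_cons_lt hadm).trans_le (rank_le_of_suffix hbad (stackAfter_suffix pre AS))
    refine ⟨((itemStacks pre AS ++ itemStacks post (stackAfter pre AS)).map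
        (IsWellFounded.rank (Push wqo)) : Multiset Ordinal),
      Multiset.replicate (C.body.length + 1) (IsWellFounded.rank (Push wqo) (A :: AS)),
      {IsWellFounded.rank (Push wqo) (stackAfter pre AS)}, by simp, ?_, ?_, ?_⟩
    · simp only [rankMeasure, itemStacks_append, itemStacks_map_instG, stackAfter_map_instG,
        stackAfter_map_atom, itemStacks_map_atom, itemStacks, List.map_append, List.map_cons,
        List.map_replicate, ← Multiset.coe_add, ← Multiset.cons_coe, Multiset.coe_replicate,
        Multiset.replicate_succ, ← Multiset.singleton_add]
      abel
    · simp only [rankMeasure, itemStacks_append, itemStacks, List.map_append, List.map_cons,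
        ← Multiset.coe_add, ← Multiset.cons_coe, ← Multiset.singleton_add]
      abel
    · simp [Multiset.mem_replicate, hlt]

theorem eq_pop_or_deriveResult {P : List Clause} {R : List GItem → ℕ}
    {mguOf : Atom → Atom → Option Subst} {s t : AState} (hst : AStepDet P wqo R mguOf s t) :
    t = ⟨s.goal.tail, s.stack.tail⟩ ∨ ∃ C ∈ P, t = deriveResult R mguOf s C := by
  cases hst with
  | popDerive => exact Or.inl rfl
  | derive pre post A anc C θ AS hC hmgu hsel =>
    refine Or.inr ⟨C, hC, ?_⟩
    have hdrop : (pre ++ .atom A anc :: post).drop (R (pre ++ .atom A anc :: post)) =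
        .atom A anc :: post := by
      rw [← hsel, List.drop_left]
    have htake : (pre ++ .atom A anc :: post).take (R (pre ++ .atom A anc :: post)) = pre := by
      rw [← hsel, List.take_left]
    simp only [deriveResult, hdrop, htake, hmgu]

theorem finite_setOf (P : List Clause) (wqo : Atom → Atom → Prop)
    (R : List GItem → ℕ) (mguOf : Atom → Atom → Option Subst) (s : AState) :
    {t | AStepDet P wqo R mguOf s t}.Finite :=
  ((P.finite_toSet.image (deriveResult R mguOf s)).insert ⟨s.goal.tail, s.stack.tail⟩).subset
    fun _ hst => hst.eq_pop_or_deriveResult.imp id fun ⟨C, hC, h⟩ => ⟨C, hC, h.symm⟩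

end AStepDet

theorem asld_tree_finite_general (P : List Clause) (wqo : Atom → Atom → Prop)
    (hwqo : IsWqo wqo) (R : List GItem → ℕ)
    (mguOf : Atom → Atom → Option Subst)
    (Q : List Atom) :
    {l : List AState | l.head? = some (initState Q) ∧
        List.Chain' (AStepDet P wqo R mguOf) l}.Finite := by
  have : IsWellFounded (List Atom) (ASLD.Push wqo) := ⟨ASLD.wellFounded_push hwqo⟩
  refine List.finite_setOf_isChain_of_acc (AStepDet.finite_setOf P wqo R mguOf) ?_
  exact acc_flip_of_invariant_of_lt Multiset.wellFounded_isDershowitzMannaLT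
    (fun s : AState => ASLD.IsBad wqo s.stack) (ASLD.rankMeasure wqo)
    (fun _ _ hbad hst => ⟨hst.isBad hbad, hst.rankMeasure_lt hbad⟩) List.Pairwise.nil

/-- Termination of ASLD trees: for any query `Q`, (finite) program `P`, and
well-quasi-order `≤` on atoms, the ASLD tree for `Q` in `P` via any
computation rule `R`, using `≤` for the admissibility checks of the derive
steps against the stack contents, is finite: the set of its nodes — the ASLD
derivations from the initial state — is finite. -/
theorem asld_tree_finite (P : List Clause) (wqo : Atom → Atom → Prop)
    (hwqo : IsWqo wqo) (R : List GItem → ℕ)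
    (mguOf : Atom → Atom → Option Subst)
    (hmgu : ∀ A B θ, mguOf A B = some θ → IsMgu θ A B)
    (Q : List Atom) :
    {l : List AState | l.head? = some (initState Q) ∧
        List.Chain' (AStepDet P wqo R mguOf) l}.Finite :=
  asld_tree_finite_general P wqo hwqo R mguOf Q
end

section
/- For definite programs, placing the newly introduced body atoms at the front of the goal (instead of in place of the selected atom) preserves the set of computed answers: a goal ← A1,...,Ak has a successful SLD derivation with computed answer θ (restricted to the variables of the goal) under the standard replacement-in-place derive rule if and only if it has one under the front-placement derive rule. -/
/-- Occurrence of a variable in a term. -/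
inductive VarInTm (v : Var) : Tm → Prop
  | var : VarInTm v (Tm.var v)
  | fn {f : ℕ} {ts : List Tm} {t : Tm} : t ∈ ts → VarInTm v t → VarInTm v (Tm.fn f ts)

/-- Occurrence of a variable in a goal (a conjunction of atoms). -/
def VarInGoal (v : Var) (G : List Atom) : Prop :=
  ∃ A ∈ G, ∃ t ∈ A.args, VarInTm v t

/-- `ρ` is a variable renaming: it maps variables injectively to variables. -/
def IsRenaming (ρ : Subst) : Prop :=
  ∃ g : Var → Var, Function.Injective g ∧ ∀ v, ρ v = Tm.var (g v)

/-- Standard SLD derive steps (labeled by the mgu used): the body of the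
clause replaces the selected atom **in place**. -/
inductive InPlaceStep (P : List Clause) : Subst → List Atom → List Atom → Prop
  | step (pre post : List Atom) (A : Atom) (C : Clause) (θ : Subst)
      (hC : C ∈ P) (hmgu : IsMgu θ A C.head) :
      InPlaceStep P θ (pre ++ A :: post)
        (pre.map (Atom.subst θ) ++ C.body.map (Atom.subst θ) ++ post.map (Atom.subst θ))

/-- Front-placement SLD derive steps (labeled by the mgu used): the newly
introduced body atoms are placed at the front of the goal. -/
inductive FrontStep (P : List Clause) : Subst → List Atom → List Atom → Prop
  | step (pre post : List Atom) (A : Atom) (C : Clause) (θ : Subst)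
      (hC : C ∈ P) (hmgu : IsMgu θ A C.head) :
      FrontStep P θ (pre ++ A :: post)
        (C.body.map (Atom.subst θ) ++ (pre ++ post).map (Atom.subst θ))

/-- Labeled derivations. -/
inductive Deriv {σ α : Type*} (Rl : α → σ → σ → Prop) : σ → List α → σ → Prop
  | nil (s : σ) : Deriv Rl s [] s
  | cons {s s' s'' : σ} {a : α} {as : List α} :
      Rl a s s' → Deriv Rl s' as s'' → Deriv Rl s (a :: as) s''

/-- The composition `θ1 θ2 ... θn` of a list of substitutions. -/
def compSubst (ls : List Subst) : Subst := ls.foldl Subst.comp idS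


theorem Tm.subst_idS : ∀ t : Tm, Tm.subst idS t = t
  | .var v => by rw [Tm.subst]; rfl
  | .fn f ts => by
    rw [Tm.subst]
    congr 1
    rw [List.map_congr_left (fun t _ => Tm.subst_idS t.1)]
    simp
decreasing_by simp only [Tm.fn.sizeOf_spec]; have := List.sizeOf_lt_of_mem t.2; omega

theorem perm_shuffle (a b c : List Atom) : (a ++ b ++ c).Perm (b ++ (a ++ c))  := by
  have h : (a ++ b ++ c).Perm ((b ++ a) ++ c) :=
    (List.perm_append_comm (l₁ := a) (l₂ := b)).append_right c
  simpa [List.append_assoc] using h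

theorem inPlace_step_perm {P : List Clause} {θ : Subst} {G H G' : List Atom}
    (h : InPlaceStep P θ G H) (hp : G.Perm G') :
    ∃ H', FrontStep P θ G' H' ∧ H.Perm H' := by
  cases h with
  | step pre post A C th hC hmgu =>
    have hA : A ∈ G' := hp.mem_iff.mp (by simp)
    obtain ⟨pre', post', rfl⟩ := List.append_of_mem hA
    have hperm : (pre ++ post).Perm (pre' ++ post') :=
      (List.perm_middle.symm.trans (hp.trans List.perm_middle)).cons_inv
    refine ⟨_, FrontStep.step pre' post' A C θ hC hmgu, ?_⟩
    refine (perm_shuffle _ _ _).trans (List.Perm.append_left _ ?_)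
    rw [← List.map_append]
    exact hperm.map _

theorem front_step_perm {P : List Clause} {θ : Subst} {G H G' : List Atom}
    (h : FrontStep P θ G H) (hp : G.Perm G') :
    ∃ H', InPlaceStep P θ G' H' ∧ H.Perm H' := by
  cases h with
  | step pre post A C th hC hmgu =>
    have hA : A ∈ G' := hp.mem_iff.mp (by simp)
    obtain ⟨pre', post', rfl⟩ := List.append_of_mem hA
    have hperm : (pre ++ post).Perm (pre' ++ post') :=
      (List.perm_middle.symm.trans (hp.trans List.perm_middle)).cons_inv
    refine ⟨_, InPlaceStep.step pre' post' A C θ hC hmgu, ?_⟩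
    refine List.Perm.trans ?_ (perm_shuffle _ _ _).symm
    refine List.Perm.append_left _ ?_
    rw [← List.map_append]
    exact hperm.map _

theorem inPlace_to_front (P : List Clause) :
    ∀ {G E : List Atom} {θs : List Subst}, Deriv (fun θ => InPlaceStep P θ) G θs E →
      ∀ {G' : List Atom}, G.Perm G' →
        ∃ E', Deriv (fun θ => FrontStep P θ) G' θs E' ∧ E.Perm E' := by
  intro G E θs h
  induction h with
  | nil s => intro G' hp; exact ⟨G', Deriv.nil _, hp⟩
  | @cons s s' s'' lbl as hstep _ ih =>
    intro G' hp
    obtain ⟨H', hstep', hHp⟩ := inPlace_step_perm hstep hp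
    obtain ⟨E', hd, he⟩ := ih hHp
    exact ⟨E', Deriv.cons hstep' hd, he⟩

theorem front_to_inPlace (P : List Clause) :
    ∀ {G E : List Atom} {θs : List Subst}, Deriv (fun θ => FrontStep P θ) G θs E →
      ∀ {G' : List Atom}, G.Perm G' →
        ∃ E', Deriv (fun θ => InPlaceStep P θ) G' θs E' ∧ E.Perm E' := by
  intro G E θs h
  induction h with
  | nil s => intro G' hp; exact ⟨G', Deriv.nil _, hp⟩
  | @cons s s' s'' lbl as hstep _ ih =>
    intro G' hp
    obtain ⟨H', hstep', hHp⟩ := front_step_perm hstep hp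
    obtain ⟨E', hd, he⟩ := ih hHp
    exact ⟨E', Deriv.cons hstep' hd, he⟩

/-- For definite programs, placing the newly introduced body atoms at the
front of the goal (instead of in place of the selected atom) preserves the
set of computed answers: a goal has a successful SLD derivation with computed
answer `θ` (restricted to the variables of the goal, up to variable renaming)
under the standard replacement-in-place derive rule if and only if it has one
under the front-placement derive rule. -/
theorem front_placement_preserves_answers (P : List Clause) (G : List Atom) :
    (∀ θs : List Subst, Deriv (fun θ => InPlaceStep P θ) G θs [] →
      ∃ (θs' : List Subst) (ρ : Subst),
        Deriv (fun θ => FrontStep P θ) G θs' [] ∧ IsRenaming ρ ∧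
          ∀ v, VarInGoal v G → compSubst θs' v = Tm.subst ρ (compSubst θs v)) ∧
    (∀ θs' : List Subst, Deriv (fun θ => FrontStep P θ) G θs' [] →
      ∃ (θs : List Subst) (ρ : Subst),
        Deriv (fun θ => InPlaceStep P θ) G θs [] ∧ IsRenaming ρ ∧
          ∀ v, VarInGoal v G → compSubst θs v = Tm.subst ρ (compSubst θs' v)) := by
  constructor
  · intro θs h
    obtain ⟨E', hd, he⟩ := inPlace_to_front P h (List.Perm.refl G)
    rw [he.symm.eq_nil] at hd
    exact ⟨θs, idS, hd, ⟨id, Function.injective_id, fun v => rfl⟩,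
      fun v _ => (Tm.subst_idS _).symm⟩
  · intro θs' h
    obtain ⟨E', hd, he⟩ := front_to_inPlace P h (List.Perm.refl G)
    rw [he.symm.eq_nil] at hd
    exact ⟨θs', idS, hd, ⟨id, Function.injective_id, fun v => rfl⟩,
      fun v _ => (Tm.subst_idS _).symm⟩
end

section
/- In ASLD resolution, no atom is popped prematurely: in any reachable state ⟨G ∥ AS⟩, reading G left to right, the prefix of G before the first ↑ mark contains only atoms whose parent (if any) is the top of AS, and every element of AS at depth d from the top corresponds to the segment of G between the d-th and (d+1)-th ↑ marks, i.e., the stack elements from top to bottom are the parents of the successive ↑-delimited segments of the goal. -/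
/-! A `derive` step puts the clause body, whose atoms all have the selected atom `A` as
parent, in front of a new `↑` mark and pushes `A`; a `popDerive` step drops an empty first
segment together with the top of the stack. So the segments of the goal stay in
correspondence with the stack elements, followed by one last segment of parentless query
atoms. Removing the selected atom and instantiating the remaining ones change neither the
segment boundaries nor the ancestor annotations. -/

namespace List

variable {α β γ : Type*}

theorem Forall₂.trans {R : α → β → Prop} {S : β → γ → Prop} {T : α → γ → Prop}
    (H : ∀ a b c, R a b → S b c → T a c) {l₁ : List α} {l₂ : List β} {l₃ : List γ}
    (h₁ : Forall₂ R l₁ l₂) (h₂ : Forall₂ S l₂ l₃) : Forall₂ T l₁ l₃ := by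
  induction h₁ generalizing l₃ with
  | nil => cases h₂; exact .nil
  | cons hab _ ih => cases h₂ with | cons hbc h => exact .cons (H _ _ _ hab hbc) (ih h)

theorem Forall₂.modifyHead {R : α → β → Prop} {f : α → α} {g : β → β}
    (H : ∀ a b, R a b → R (f a) (g b)) {l₁ : List α} {l₂ : List β} (h : Forall₂ R l₁ l₂) :
    Forall₂ R (l₁.modifyHead f) (l₂.modifyHead g) := by
  cases h with
  | nil => exact .nil
  | cons hab h => exact .cons (H _ _ hab) h

theorem Forall₂.exists_of_getElem?_eq_some {R : α → β → Prop} {l₁ : List α} {l₂ : List β}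
    (h : Forall₂ R l₁ l₂) {i : ℕ} {a : α} (ha : l₁[i]? = some a) :
    ∃ b, l₂[i]? = some b ∧ R a b := by
  induction h generalizing i with
  | nil => simp at ha
  | cons _ _ ih =>
    cases i with
    | zero => simp_all
    | succ i => exact ih ha

theorem eq_getElem?_of_getElem?_map_some_append_none {l : List α} {i : ℕ} {o : Option α}
    (h : (l.map some ++ [none])[i]? = some o) : o = l[i]? := by
  rcases lt_trichotomy i l.length with hi | rfl | hi <;> simp_all [getElem?_append_left]

theorem splitOnP_map (f : α → β) (p : β → Bool) (l : List α) :
    (l.map f).splitOnP p = (l.splitOnP (p ∘ f)).map (map f) := by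
  induction l with
  | nil => simp [splitOnP_nil]
  | cons a l ih =>
    obtain ⟨s, ss, hs⟩ := exists_cons_of_ne_nil (splitOnP_ne_nil (p ∘ f) l)
    cases ha : p (f a) <;> simp [splitOnP_cons_eq_if_modifyHead, ih, hs, ha]

theorem forall₂_sublist_splitOnP_insert {p : α → Bool} {x : α} (hx : p x = false)
    (l₁ l₂ : List α) :
    Forall₂ (· <+ ·) ((l₁ ++ l₂).splitOnP p) ((l₁ ++ x :: l₂).splitOnP p) := by
  induction l₁ with
  | nil =>
    rw [nil_append, nil_append, splitOnP_cons_eq_if_modifyHead, hx, if_neg Bool.false_ne_true]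
    obtain ⟨s, ss, hs⟩ := exists_cons_of_ne_nil (splitOnP_ne_nil p l₂)
    rw [hs]
    exact .cons (sublist_cons_self x s) (forall₂_same.2 fun s _ => Sublist.refl s)
  | cons a l₁ ih =>
    simp only [cons_append, splitOnP_cons_eq_if_modifyHead]
    split
    · exact .cons (Sublist.refl []) ih
    · exact ih.modifyHead fun _ _ h => h.cons_cons a

end List

def HasParent (seg : List GItem) (parent : Option Atom) : Prop :=
  ∀ A anc, GItem.atom A anc ∈ seg → anc.head? = parent

theorem HasParent.mono {seg seg' : List GItem} {parent : Option Atom}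
    (h : HasParent seg' parent) (hsub : seg ⊆ seg') : HasParent seg parent :=
  fun A anc hA => h A anc (hsub hA)

theorem HasParent.map_instG {seg : List GItem} {parent : Option Atom} (θ : Subst)
    (h : HasParent seg parent) : HasParent (seg.map (instG θ)) parent := by
  intro A anc hA
  obtain ⟨_ | ⟨B, anc'⟩, hB, hBA⟩ := List.mem_map.mp hA
  · cases hBA
  · cases hBA
    exact h B anc hB

theorem isPop_comp_instG (θ : Subst) : GItem.isPop ∘ instG θ = GItem.isPop := by
  funext x
  cases x <;> rfl

def SegmentsMatchStack (s : AState) : Prop :=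
  List.Forall₂ HasParent (s.goal.splitOnP GItem.isPop) (s.stack.map some ++ [none])

theorem segmentsMatchStack_initState (Q : List Atom) : SegmentsMatchStack (initState Q) := by
  have hQ : ∀ x ∈ Q.map (GItem.atom · []), x.isPop = false := by simp [GItem.isPop]
  simp only [SegmentsMatchStack, initState, List.splitOnP_eq_singleton hQ, List.map_nil,
    List.nil_append, List.forall₂_cons]
  refine ⟨?_, .nil⟩
  intro A anc hA
  obtain ⟨_, _, ⟨⟩⟩ := List.mem_map.mp hA
  rfl

theorem AStep.segmentsMatchStack {P : List Clause} {wqo : Atom → Atom → Prop}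
    {s t : AState} (hstep : AStep P wqo s t) (hs : SegmentsMatchStack s) :
    SegmentsMatchStack t := by
  cases hstep with
  | derive pre post A anc C θ AS =>
    have hbody : ∀ x ∈ C.body.map fun B => GItem.atom (B.subst θ) (A :: anc),
        x.isPop = false := by simp [GItem.isPop]
    simp only [SegmentsMatchStack, List.splitOnP_append_cons_of_forall_mem hbody GItem.pop rfl,
      List.splitOnP_map, isPop_comp_instG, List.map_cons, List.cons_append,
      List.forall₂_cons, List.forall₂_map_left_iff] at hs ⊢
    refine ⟨?_, ?_⟩
    · intro B anc' hB
      obtain ⟨_, _, ⟨⟩⟩ := List.mem_map.mp hB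
      rfl
    · exact (List.forall₂_sublist_splitOnP_insert rfl pre post).trans
        (fun _ _ _ hsub h => (h.mono hsub.subset).map_instG θ) hs
  | popDerive G T AS =>
    simp only [SegmentsMatchStack, List.splitOnP_cons_eq_if_modifyHead, GItem.isPop,
      if_true, List.map_cons, List.cons_append, List.forall₂_cons] at hs
    exact hs.2

/-- In ASLD resolution, no atom is popped prematurely: in any reachable state
`⟨G ∥ AS⟩`, reading `G` left to right and splitting it into the maximal
`↑`-delimited segments of non-`↑` atoms, the stack elements from top to bottom
are the parents of the successive segments.  Formally, for every atom in the
`d`-th segment of the goal, its parent — the first element of its (ghost)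
ancestor annotation, if any — is exactly the stack element at depth `d` from
the top: `anc.head? = AS[d]?`.  In particular the prefix of `G` before the
first `↑` mark contains only atoms whose parent (if any) is the top of `AS`,
and atoms with no parent (`anc.head? = none`) occur only in segments beyond
the stack (`AS[d]? = none`). -/
theorem stack_segments (P : List Clause) (wqo : Atom → Atom → Prop)
    (Q : List Atom) (s : AState)
    (hreach : Relation.ReflTransGen (AStep P wqo) (initState Q) s) :
    ∀ (d : ℕ) (seg : List GItem),
      (s.goal.splitOnP GItem.isPop)[d]? = some seg →
        ∀ (A : Atom) (anc : List Atom), GItem.atom A anc ∈ seg →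
          anc.head? = s.stack[d]? := by
  have hinv : SegmentsMatchStack s := by
    induction hreach with
    | refl => exact segmentsMatchStack_initState Q
    | tail _ hstep ih => exact hstep.segmentsMatchStack ih
  intro d seg hseg A anc hA
  obtain ⟨parent, hparent, hseg_parent⟩ := hinv.exists_of_getElem?_eq_some hseg
  rw [List.eq_getElem?_of_getElem?_map_some_append_none hparent] at hseg_parent
  exact hseg_parent A anc hA
end
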